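/- arXiv:2302.11873 — 2 statements merged into one kernel-verified Lean document; each statement's English description precedes it below -/
import Mathlib

section
/- For discrete random variables M, X, Y, the information deficiency satisfies δ^I(M : X \ Y) ≤ I(M ; X | Y). -/
open Real BigOperators Finset

/-- Mutual information I(A;B) of a joint pmf `q` on A × B (in nats). -/
noncomputable def mi {A B : Type} [Fintype A] [Fintype B] (q : A → B → ℝ) : ℝ :=
  ∑ a, ∑ b, q a b * Real.log (q a b / ((∑ b', q a b') * (∑ a', q a' b)))

/-- Conditional mutual information I(A;B|C) of a joint pmf `q` on A × B × C (in nats). -/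
noncomputable def cmi {A B C : Type} [Fintype A] [Fintype B] [Fintype C]
    (q : A → B → C → ℝ) : ℝ :=
  ∑ a, ∑ b, ∑ c, q a b c * Real.log
    (q a b c * (∑ a', ∑ b', q a' b' c) / ((∑ b', q a b' c) * (∑ a', q a' b c)))

/-- A (row-stochastic) channel from A to B. -/
structure Channel (A B : Type) [Fintype A] [Fintype B] where
  k : A → B → ℝ
  nonneg : ∀ a b, 0 ≤ k a b
  sum_one : ∀ a, ∑ b, k a b = 1

/-- `p` is a joint pmf on M × X × Y. -/
def IsPMF3 {M X Y : Type} [Fintype M] [Fintype X] [Fintype Y] (p : M → X → Y → ℝ) : Prop :=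
  (∀ m x y, 0 ≤ p m x y) ∧ ∑ m, ∑ x, ∑ y, p m x y = 1

/-- The information deficiency δ^I(M : X \ Y): the supremum, over all channels P_{T|M}
(with finite alphabet T, so that T—M—(X,Y) is a Markov chain), of I(T;X) − I(T;Y),
where the joint of (T,M,X,Y) is P(t,m,x,y) = P_{T|M}(t|m)·P_{MXY}(m,x,y). -/
noncomputable def deltaI {M X Y : Type} [Fintype M] [Fintype X] [Fintype Y]
    (p : M → X → Y → ℝ) : ℝ :=
  sSup { d : ℝ | ∃ (n : ℕ) (c : Channel M (Fin n)),
    d = mi (fun t x => ∑ m, ∑ y, c.k m t * p m x y)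
      - mi (fun t y => ∑ m, ∑ x, c.k m t * p m x y) }

private lemma gibbs_term (a b : ℝ) (ha : 0 ≤ a) (hb : 0 ≤ b) (h : 0 < a → 0 < b) :
    a - b ≤ a * Real.log (a / b) := by
  rcases ha.eq_or_lt with rfl | hpos
  · simpa using hb
  · have hbp := h hpos
    have hlog : Real.log (b / a) ≤ b / a - 1 := Real.log_le_sub_one_of_pos (div_pos hbp hpos)
    have h2 : a * Real.log (b / a) ≤ a * (b / a - 1) := mul_le_mul_of_nonneg_left hlog hpos.le
    have h3 : a * (b / a - 1) = b - a := by field_simp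
    have h4 : Real.log (a / b) = - Real.log (b / a) := by rw [← Real.log_inv, inv_div]
    rw [h4]; nlinarith [h2, h3]

private lemma sum3_rot {A B C : Type} [Fintype A] [Fintype B] [Fintype C] (f : A → B → C → ℝ) :
    ∑ a, ∑ b, ∑ c, f a b c = ∑ b, ∑ c, ∑ a, f a b c := by
  rw [Finset.sum_comm]
  exact Finset.sum_congr rfl fun b _ => Finset.sum_comm

private lemma sum4_rot {A B C D : Type} [Fintype A] [Fintype B] [Fintype C] [Fintype D]
    (f : A → B → C → D → ℝ) :
    ∑ a, ∑ b, ∑ c, ∑ d, f a b c d = ∑ d, ∑ a, ∑ b, ∑ c, f a b c d := by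
  refine Eq.trans (Finset.sum_congr rfl fun a _ => (sum3_rot (fun d b c => f a b c d)).symm) ?_
  exact Finset.sum_comm

private lemma key_bound {M X Y : Type} [Fintype M] [Fintype X] [Fintype Y]
    (p : M → X → Y → ℝ) (hp0 : ∀ m x y, 0 ≤ p m x y)
    (hp1 : ∑ m, ∑ x, ∑ y, p m x y = 1) {n : ℕ} (c : Channel M (Fin n)) :
    mi (fun t x => ∑ m, ∑ y, c.k m t * p m x y)
      - mi (fun t y => ∑ m, ∑ x, c.k m t * p m x y) ≤ cmi p := by
  classical
  set qTX : Fin n → X → ℝ := fun t x => ∑ m, ∑ y, c.k m t * p m x y with hqTXdef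
  set qTY : Fin n → Y → ℝ := fun t y => ∑ m, ∑ x, c.k m t * p m x y with hqTYdef
  set PX : X → ℝ := fun x => ∑ m, ∑ y, p m x y with hPXdef
  set PY : Y → ℝ := fun y => ∑ m, ∑ x, p m x y with hPYdef
  set PMY : M → Y → ℝ := fun m y => ∑ x, p m x y with hPMYdef
  set PXY : X → Y → ℝ := fun x y => ∑ m, p m x y with hPXYdef
  have hqTX : ∀ t x, qTX t x = ∑ m, ∑ y, c.k m t * p m x y := fun t x => by rw [hqTXdef]
  have hqTY : ∀ t y, qTY t y = ∑ m, ∑ x, c.k m t * p m x y := fun t y => by rw [hqTYdef]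
  have hPXa : ∀ x, (∑ m, ∑ y, p m x y) = PX x := fun x => by rw [hPXdef]
  have hPYa : ∀ y, (∑ m, ∑ x, p m x y) = PY y := fun y => by rw [hPYdef]
  have hPMYa : ∀ m y, (∑ x, p m x y) = PMY m y := fun m y => by rw [hPMYdef]
  have hPXYa : ∀ x y, (∑ m, p m x y) = PXY x y := fun x y => by rw [hPXYdef]
  -- nonnegativity facts
  have hpx0 : ∀ x, 0 ≤ PX x := fun x => by
    rw [hPXdef]; exact sum_nonneg fun m _ => sum_nonneg fun y _ => hp0 m x y
  have hpy0 : ∀ y, 0 ≤ PY y := fun y => by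
    rw [hPYdef]; exact sum_nonneg fun m _ => sum_nonneg fun x _ => hp0 m x y
  have hpmy0 : ∀ m y, 0 ≤ PMY m y := fun m y => by
    rw [hPMYdef]; exact sum_nonneg fun x _ => hp0 m x y
  have hpxy0 : ∀ x y, 0 ≤ PXY x y := fun x y => by
    rw [hPXYdef]; exact sum_nonneg fun m _ => hp0 m x y
  have hqtx0 : ∀ t x, 0 ≤ qTX t x := fun t x => by
    rw [hqTX]; exact sum_nonneg fun m _ => sum_nonneg fun y _ =>
      mul_nonneg (c.nonneg m t) (hp0 m x y)
  have hqty0 : ∀ t y, 0 ≤ qTY t y := fun t y => by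
    rw [hqTY]; exact sum_nonneg fun m _ => sum_nonneg fun x _ =>
      mul_nonneg (c.nonneg m t) (hp0 m x y)
  -- marginal identities
  have hcol_x : ∀ x, (∑ t, qTX t x) = PX x := by
    intro x
    simp only [hqTXdef, hPXdef]
    rw [Finset.sum_comm]
    refine Finset.sum_congr rfl fun m _ => ?_
    rw [Finset.sum_comm]
    refine Finset.sum_congr rfl fun y _ => ?_
    rw [← Finset.sum_mul, c.sum_one, one_mul]
  have hcol_y : ∀ y, (∑ t, qTY t y) = PY y := by
    intro y
    simp only [hqTYdef, hPYdef]
    rw [Finset.sum_comm]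
    refine Finset.sum_congr rfl fun m _ => ?_
    rw [Finset.sum_comm]
    refine Finset.sum_congr rfl fun x _ => ?_
    rw [← Finset.sum_mul, c.sum_one, one_mul]
  have hrow_y : ∀ t, (∑ y, qTY t y) = ∑ x, qTX t x := by
    intro t
    simp only [hqTXdef, hqTYdef]
    rw [Finset.sum_comm]
    rw [show (∑ m, ∑ y, ∑ x, c.k m t * p m x y) = ∑ m, ∑ x, ∑ y, c.k m t * p m x y from
      Finset.sum_congr rfl fun m _ => Finset.sum_comm]
    rw [Finset.sum_comm]
  have hq_alt : ∀ t y, (∑ m, c.k m t * PMY m y) = qTY t y := by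
    intro t y
    simp only [hqTYdef, hPMYdef, Finset.mul_sum]
  have hPXalt : ∀ x, (∑ y, PXY x y) = PX x := by
    intro x
    simp only [hPXYdef, hPXdef]
    exact Finset.sum_comm
  -- unfold and normalize the goal
  simp only [mi, cmi]
  simp only [hcol_x, hcol_y, hrow_y, hPYa]
  simp only [hPMYa, hPXYa]

  -- expand the three double sums into quadruple sums over (t, m, x, y)
  have hBexp : (∑ t, ∑ x, qTX t x * Real.log (qTX t x / ((∑ x', qTX t x') * PX x)))
      = ∑ t, ∑ m, ∑ x, ∑ y, c.k m t * p m x y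
          * Real.log (qTX t x / ((∑ x', qTX t x') * PX x)) := by
    refine Finset.sum_congr rfl fun t _ => ?_
    refine Eq.trans ?_ Finset.sum_comm
    refine Finset.sum_congr rfl fun x _ => ?_
    generalize Real.log _ = w
    rw [hqTX t x, Finset.sum_mul]
    exact Finset.sum_congr rfl fun m _ => Finset.sum_mul _ _ _
  have hCexp : (∑ t, ∑ y, qTY t y * Real.log (qTY t y / ((∑ x', qTX t x') * PY y)))
      = ∑ t, ∑ m, ∑ x, ∑ y, c.k m t * p m x y
          * Real.log (qTY t y / ((∑ x', qTX t x') * PY y)) := by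
    refine Finset.sum_congr rfl fun t _ => ?_
    refine Eq.trans ?_ (sum3_rot _)
    refine Finset.sum_congr rfl fun y _ => ?_
    generalize Real.log _ = w
    rw [hqTY t y, Finset.sum_mul]
    exact Finset.sum_congr rfl fun m _ => Finset.sum_mul _ _ _
  have hAexp : (∑ m, ∑ x, ∑ y, p m x y * Real.log (p m x y * PY y / (PMY m y * PXY x y)))
      = ∑ t, ∑ m, ∑ x, ∑ y, c.k m t * p m x y
          * Real.log (p m x y * PY y / (PMY m y * PXY x y)) := by
    refine Eq.trans ?_ (sum4_rot _)
    refine Finset.sum_congr rfl fun m _ => Finset.sum_congr rfl fun x _ =>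
      Finset.sum_congr rfl fun y _ => ?_
    generalize Real.log _ = w
    rw [show p m x y * w = (∑ t, c.k m t * p m x y) * w from by
      rw [← Finset.sum_mul, c.sum_one, one_mul]]
    exact Finset.sum_mul _ _ _
  rw [hBexp, hCexp, hAexp]
  -- the comparison function rr
  set rr : Fin n → M → X → Y → ℝ := fun t m x y =>
    c.k m t * PMY m y * (PXY x y * (qTX t x / (qTY t y * PX x))) with hrrdef
  have hrr0 : ∀ t m x y, 0 ≤ rr t m x y := fun t m x y => by
    rw [hrrdef]
    exact mul_nonneg (mul_nonneg (c.nonneg m t) (hpmy0 m y))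
      (mul_nonneg (hpxy0 x y) (div_nonneg (hqtx0 t x) (mul_nonneg (hqty0 t y) (hpx0 x))))
  have hQ : (∑ t, ∑ m, ∑ x, ∑ y, c.k m t * p m x y) = 1 := by
    rw [← sum4_rot (fun m x y t => c.k m t * p m x y)]
    simp only [← Finset.sum_mul, c.sum_one, one_mul]
    exact hp1
  have hR : (∑ t, ∑ m, ∑ x, ∑ y, rr t m x y) ≤ 1 := by
    have step2 : ∀ t x y, (∑ m, rr t m x y) ≤ PXY x y * (qTX t x / PX x) := by
      intro t x y
      have e : (∑ m, rr t m x y)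
          = qTY t y * (PXY x y * (qTX t x / (qTY t y * PX x))) := by
        simp only [hrrdef]
        rw [← Finset.sum_mul, hq_alt]
      rw [e]
      rcases eq_or_ne (qTY t y) 0 with h | h
      · rw [h, zero_mul]
        exact mul_nonneg (hpxy0 x y) (div_nonneg (hqtx0 t x) (hpx0 x))
      · rcases eq_or_ne (PX x) 0 with h2 | h2
        · simp [h2]
        · refine le_of_eq ?_
          field_simp
    calc (∑ t, ∑ m, ∑ x, ∑ y, rr t m x y)
        = ∑ t, ∑ x, ∑ y, ∑ m, rr t m x y :=
          Finset.sum_congr rfl fun t _ => sum3_rot _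
      _ ≤ ∑ t, ∑ x, ∑ y, PXY x y * (qTX t x / PX x) :=
          Finset.sum_le_sum fun t _ => Finset.sum_le_sum fun x _ =>
            Finset.sum_le_sum fun y _ => step2 t x y
      _ = ∑ t, ∑ x, PX x * (qTX t x / PX x) := by
          refine Finset.sum_congr rfl fun t _ => Finset.sum_congr rfl fun x _ => ?_
          rw [← Finset.sum_mul, hPXalt]
      _ ≤ ∑ t, ∑ x, qTX t x := by
          refine Finset.sum_le_sum fun t _ => Finset.sum_le_sum fun x _ => ?_
          rcases eq_or_ne (PX x) 0 with h | h
          · rw [h, zero_mul]; exact hqtx0 t x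
          · refine le_of_eq ?_
            field_simp
      _ = ∑ x, PX x := by
          rw [Finset.sum_comm]
          exact Finset.sum_congr rfl fun x _ => hcol_x x
      _ = 1 := by
          simp only [hPXdef]
          exact Finset.sum_comm.trans hp1
  -- the pointwise Gibbs inequality
  have hterm : ∀ t m x y,
      c.k m t * p m x y * Real.log (qTX t x / ((∑ x', qTX t x') * PX x))
        ≤ c.k m t * p m x y * Real.log (p m x y * PY y / (PMY m y * PXY x y))
          + c.k m t * p m x y * Real.log (qTY t y / ((∑ x', qTX t x') * PY y))
          + rr t m x y - c.k m t * p m x y := by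
    intro t m x y
    by_cases hq : c.k m t * p m x y = 0
    · rw [hq]
      simp only [zero_mul, zero_add, add_zero, sub_zero]
      exact hrr0 t m x y
    · obtain ⟨hc', hp'⟩ := mul_ne_zero_iff.mp hq
      have hcpos : 0 < c.k m t := (c.nonneg m t).lt_of_ne (Ne.symm hc')
      have hppos : 0 < p m x y := (hp0 m x y).lt_of_ne (Ne.symm hp')
      have hPMYpos : 0 < PMY m y := by
        rw [hPMYdef]
        exact Finset.sum_pos' (fun x' _ => hp0 m x' y) ⟨x, Finset.mem_univ x, hppos⟩
      have hPXYpos : 0 < PXY x y := by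
        rw [hPXYdef]
        exact Finset.sum_pos' (fun m' _ => hp0 m' x y) ⟨m, Finset.mem_univ m, hppos⟩
      have hPXpos : 0 < PX x := by
        rw [hPXdef]
        exact Finset.sum_pos' (fun m' _ => Finset.sum_nonneg fun y' _ => hp0 m' x y')
          ⟨m, Finset.mem_univ m, Finset.sum_pos' (fun y' _ => hp0 m x y')
            ⟨y, Finset.mem_univ y, hppos⟩⟩
      have hPYpos : 0 < PY y := by
        rw [hPYdef]
        exact Finset.sum_pos' (fun m' _ => Finset.sum_nonneg fun x' _ => hp0 m' x' y)
          ⟨m, Finset.mem_univ m, Finset.sum_pos' (fun x' _ => hp0 m x' y)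
            ⟨x, Finset.mem_univ x, hppos⟩⟩
      have hqTXpos : 0 < qTX t x := by
        rw [hqTX]
        exact Finset.sum_pos' (fun m' _ => Finset.sum_nonneg fun y' _ =>
            mul_nonneg (c.nonneg m' t) (hp0 m' x y'))
          ⟨m, Finset.mem_univ m, Finset.sum_pos'
            (fun y' _ => mul_nonneg (c.nonneg m t) (hp0 m x y'))
            ⟨y, Finset.mem_univ y, mul_pos hcpos hppos⟩⟩
      have hqTYpos : 0 < qTY t y := by
        rw [hqTY]
        exact Finset.sum_pos' (fun m' _ => Finset.sum_nonneg fun x' _ =>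
            mul_nonneg (c.nonneg m' t) (hp0 m' x' y))
          ⟨m, Finset.mem_univ m, Finset.sum_pos'
            (fun x' _ => mul_nonneg (c.nonneg m t) (hp0 m x' y))
            ⟨x, Finset.mem_univ x, mul_pos hcpos hppos⟩⟩
      have hrowpos : 0 < ∑ x', qTX t x' :=
        Finset.sum_pos' (fun x' _ => hqtx0 t x') ⟨x, Finset.mem_univ x, hqTXpos⟩
      have hrrpos : 0 < rr t m x y := by
        rw [hrrdef]
        exact mul_pos (mul_pos hcpos hPMYpos)
          (mul_pos hPXYpos (div_pos hqTXpos (mul_pos hqTYpos hPXpos)))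
      have key := gibbs_term (c.k m t * p m x y) (rr t m x y)
        (mul_pos hcpos hppos).le hrrpos.le (fun _ => hrrpos)
      have hApos : 0 < p m x y * PY y / (PMY m y * PXY x y) :=
        div_pos (mul_pos hppos hPYpos) (mul_pos hPMYpos hPXYpos)
      have hBpos : 0 < qTX t x / ((∑ x', qTX t x') * PX x) :=
        div_pos hqTXpos (mul_pos hrowpos hPXpos)
      have hCpos : 0 < qTY t y / ((∑ x', qTX t x') * PY y) :=
        div_pos hqTYpos (mul_pos hrowpos hPYpos)
      have hratio : (c.k m t * p m x y) / rr t m x y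
          = p m x y * PY y / (PMY m y * PXY x y)
            / (qTX t x / ((∑ x', qTX t x') * PX x))
            * (qTY t y / ((∑ x', qTX t x') * PY y)) := by
        rw [hrrdef]
        have h1 := hPMYpos.ne'
        have h2 := hPXYpos.ne'
        have h3 := hPXpos.ne'
        have h4 := hPYpos.ne'
        have h5 := hqTXpos.ne'
        have h6 := hqTYpos.ne'
        have h7 := hrowpos.ne'
        field_simp
      rw [hratio, Real.log_mul (div_pos hApos hBpos).ne' hCpos.ne',
        Real.log_div hApos.ne' hBpos.ne'] at key
      nlinarith [key]
  have main : (∑ t, ∑ m, ∑ x, ∑ y, c.k m t * p m x y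
        * Real.log (qTX t x / ((∑ x', qTX t x') * PX x)))
      ≤ ∑ t, ∑ m, ∑ x, ∑ y,
          (c.k m t * p m x y * Real.log (p m x y * PY y / (PMY m y * PXY x y))
            + c.k m t * p m x y * Real.log (qTY t y / ((∑ x', qTX t x') * PY y))
            + rr t m x y - c.k m t * p m x y) :=
    Finset.sum_le_sum fun t _ => Finset.sum_le_sum fun m _ => Finset.sum_le_sum fun x _ =>
      Finset.sum_le_sum fun y _ => hterm t m x y
  simp only [Finset.sum_add_distrib, Finset.sum_sub_distrib] at main
  linarith [main, hQ, hR]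


private def trivChan (M : Type) [Fintype M] : Channel M (Fin 1) :=
  ⟨fun _ _ => 1, fun _ _ => zero_le_one, fun _ => by simp⟩

/-- δ^I(M : X \ Y) ≤ I(M ; X | Y). -/
theorem deltaI_le_cmi {M X Y : Type} [Fintype M] [Fintype X] [Fintype Y]
    (p : M → X → Y → ℝ) (hp : IsPMF3 p) :
    deltaI p ≤ cmi p := by
  obtain ⟨hp0, hp1⟩ := hp
  have hk : ∀ (m : M) (t : Fin 1), (trivChan M).k m t = 1 := fun _ _ => rfl
  have hx0 : mi (fun (t : Fin 1) x => ∑ m, ∑ y, (trivChan M).k m t * p m x y) = 0 := by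
    simp only [mi, hk, one_mul, Fin.sum_univ_one]
    have hsum1 : (∑ x, ∑ m, ∑ y, p m x y) = 1 := Finset.sum_comm.trans hp1
    rw [hsum1]
    refine Finset.sum_eq_zero fun x _ => ?_
    rcases eq_or_ne (∑ m, ∑ y, p m x y) 0 with h | h
    · rw [h, zero_mul]
    · rw [one_mul, div_self h, Real.log_one, mul_zero]
  have hy0 : mi (fun (t : Fin 1) y => ∑ m, ∑ x, (trivChan M).k m t * p m x y) = 0 := by
    simp only [mi, hk, one_mul, Fin.sum_univ_one]
    have hsum1 : (∑ y, ∑ m, ∑ x, p m x y) = 1 := by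
      rw [Finset.sum_comm]
      refine Eq.trans ?_ hp1
      exact Finset.sum_congr rfl fun m _ => Finset.sum_comm
    rw [hsum1]
    refine Finset.sum_eq_zero fun y _ => ?_
    rcases eq_or_ne (∑ m, ∑ x, p m x y) 0 with h | h
    · rw [h, zero_mul]
    · rw [one_mul, div_self h, Real.log_one, mul_zero]
  have hcmi0 : 0 ≤ cmi p := by
    have h := key_bound p hp0 hp1 (trivChan M)
    rw [hx0, hy0] at h
    linarith
  refine Real.sSup_le ?_ hcmi0
  rintro d ⟨n, c, rfl⟩
  exact key_bound p hp0 hp1 c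
end

section
/- Any PID definition whose unique information UI(M:X\Y) depends only on the marginal pair (P_{MX}, P_{MY}) and satisfies UI(M:X\Y) ≤ I_Q(M;X|Y) for all Q with the same (M,X)- and (M,Y)-marginals, is upper bounded by the tilde-unique information: UI(M:X\Y) ≤ min_{Q ∈ Δ_P} I_Q(M;X|Y). In particular, if the tilde-unique information is 0 then UI(M:X\Y) = 0 for any such non-negative UI. -/
open Real BigOperators Finset

theorem UI_le_tildeUI_general {M X Y : Type} [Fintype M] [Fintype X] [Fintype Y]
    (UI : (M → X → Y → ℝ) → ℝ)
    (hnonneg : ∀ P : M → X → Y → ℝ, IsPMF3 P → 0 ≤ UI P)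
    (hmarg : ∀ P Q : M → X → Y → ℝ, IsPMF3 P → IsPMF3 Q →
      (∀ m x, ∑ y, P m x y = ∑ y, Q m x y) →
      (∀ m y, ∑ x, P m x y = ∑ x, Q m x y) → UI P = UI Q)
    (hbound : ∀ P : M → X → Y → ℝ, IsPMF3 P → UI P ≤ cmi P)
    (P : M → X → Y → ℝ) (hP : IsPMF3 P)
    -- Q is a minimizer of I_Q(M;X|Y) over Δ_P:
    (Q : M → X → Y → ℝ) (hQ : IsPMF3 Q)
    (hQX : ∀ m x, ∑ y, Q m x y = ∑ y, P m x y)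
    (hQY : ∀ m y, ∑ x, Q m x y = ∑ x, P m x y) :
    UI P ≤ cmi Q ∧ (cmi Q = 0 → UI P = 0) := by
  have hUI : UI P = UI Q :=
    hmarg P Q hP hQ (fun m x => (hQX m x).symm) (fun m y => (hQY m y).symm)
  have hle : UI P ≤ cmi Q := hUI ▸ hbound Q hQ
  exact ⟨hle, fun hzero => le_antisymm (hzero ▸ hle) (hnonneg P hP)⟩

/-- any PID whose unique information UI is non-negative, depends only on
the marginal pair (P_{MX}, P_{MY}) and satisfies UI ≤ I_Q(M;X|Y) for every Q with those
marginals, is upper bounded by the tilde-unique information min_{Q ∈ Δ_P} I_Q(M;X|Y);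
in particular if the latter is 0 then UI(M:X\Y) = 0. -/
theorem UI_le_tildeUI {M X Y : Type} [Fintype M] [Fintype X] [Fintype Y]
    (UI : (M → X → Y → ℝ) → ℝ)
    (hnonneg : ∀ P : M → X → Y → ℝ, IsPMF3 P → 0 ≤ UI P)
    (hmarg : ∀ P Q : M → X → Y → ℝ, IsPMF3 P → IsPMF3 Q →
      (∀ m x, ∑ y, P m x y = ∑ y, Q m x y) →
      (∀ m y, ∑ x, P m x y = ∑ x, Q m x y) → UI P = UI Q)
    (hbound : ∀ P : M → X → Y → ℝ, IsPMF3 P → UI P ≤ cmi P)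
    (P : M → X → Y → ℝ) (hP : IsPMF3 P)
    -- Q is a minimizer of I_Q(M;X|Y) over Δ_P:
    (Q : M → X → Y → ℝ) (hQ : IsPMF3 Q)
    (hQX : ∀ m x, ∑ y, Q m x y = ∑ y, P m x y)
    (hQY : ∀ m y, ∑ x, Q m x y = ∑ x, P m x y)
    (hmin : ∀ Q' : M → X → Y → ℝ, IsPMF3 Q' →
      (∀ m x, ∑ y, Q' m x y = ∑ y, P m x y) →
      (∀ m y, ∑ x, Q' m x y = ∑ x, P m x y) →
      cmi Q ≤ cmi Q') :
    UI P ≤ cmi Q ∧ (cmi Q = 0 → UI P = 0) :=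
  UI_le_tildeUI_general UI hnonneg hmarg hbound P hP Q hQ hQX hQY
end
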